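/- Let S be a standard Borel space, κ a Markov kernel from S to S, μ a probability measure on S, and let ℙ be the law on S^ℕ of the time-homogeneous Markov chain with initial distribution μ and transition kernel κ (given by the Ionescu–Tulcea construction), with Xₙ : S^ℕ → S the n-th coordinate map. Let c : S → ℝ be bounded measurable, γ ∈ ℝ, and let W : S → ℝ be a measurable function such that W is integrable with respect to κ(s) for every s ∈ S and W(Xₙ) is ℙ-integrable for every n. Assume the dynamic programming inequality W(s) + γ ≥ c(s) + ∫_S W(s') κ(s)(ds') holds for all s ∈ S, and that E[W(Xₙ)]/n → 0 as n → ∞. Then limsup_{n→∞} (1/n) ∑_{k=0}^{n−1} E[c(X_k)] ≤ γ. -/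

import Mathlib

/-!
Integrating the Markov property shows that the law of `Xₙ₊₁` is `κ ∘ₘ law(Xₙ)`. Integrating the
dynamic programming inequality against `law(Xₙ)` then gives
`E[c(Xₙ)] + E[W(Xₙ₊₁)] ≤ E[W(Xₙ)] + γ`; summing over `n` telescopes to
`∑_{k<n} E[c(X_k)] ≤ E[W(X₀)] - E[W(Xₙ)] + nγ`, and after dividing by `n` the right-hand side
tends to `γ` because `E[W(Xₙ)]/n → 0`.
-/

open MeasureTheory ProbabilityTheory Filter Topology

section KernelComp

variable {α β E : Type*} [MeasurableSpace α] [MeasurableSpace β]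
  [NormedAddCommGroup E] [NormedSpace ℝ E] {κ : Kernel α β} {μ : Measure α} {f : β → E}

lemma integrable_integral_of_integrable_comp (hf : Integrable f (κ ∘ₘ μ)) :
    Integrable (fun a ↦ ∫ b, f b ∂κ a) μ := by
  rw [Measure.comp_eq_comp_const_apply] at hf
  simpa using hf.integral_comp

lemma integral_comp_eq_integral_integral (hf : Integrable f (κ ∘ₘ μ)) :
    ∫ b, f b ∂(κ ∘ₘ μ) = ∫ a, ∫ b, f b ∂κ a ∂μ := by
  rw [Measure.comp_eq_comp_const_apply] at hf ⊢
  simpa using Kernel.integral_comp hf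

end KernelComp

lemma map_eq_comp_map_of_condExp_indicator {α β Ω : Type*} [MeasurableSpace α]
    [MeasurableSpace β] {m mΩ : MeasurableSpace Ω} {P : Measure Ω} [IsFiniteMeasure P]
    {κ : Kernel α β} [IsFiniteKernel κ] {X : Ω → α} {Y : Ω → β}
    (hm : m ≤ mΩ) (hX : Measurable X) (hY : Measurable Y)
    (h : ∀ A, MeasurableSet A →
      P[fun ω ↦ A.indicator (fun _ ↦ (1 : ℝ)) (Y ω) | m] =ᵐ[P] fun ω ↦ (κ (X ω) A).toReal) :
    P.map Y = κ ∘ₘ P.map X := by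
  ext A hA
  rw [← ENNReal.toReal_eq_toReal_iff' (measure_ne_top _ _) (measure_ne_top _ _)]
  calc (P.map Y A).toReal = ∫ ω, A.indicator (fun _ ↦ (1 : ℝ)) (Y ω) ∂P := by
        rw [← integral_map hY.aemeasurable (measurable_const.indicator hA).aestronglyMeasurable]
        exact (integral_indicator_one hA).symm
    _ = ∫ ω, (κ (X ω) A).toReal ∂P := by
        rw [← integral_condExp hm]
        exact integral_congr_ae (h A hA)
    _ = ((κ ∘ₘ P.map X) A).toReal := by
        rw [integral_toReal (f := fun ω ↦ κ (X ω) A) ((κ.measurable_coe hA).comp hX).aemeasurable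
            (ae_of_all _ fun _ ↦ measure_lt_top _ _),
          Measure.bind_apply hA κ.aemeasurable, lintegral_map (κ.measurable_coe hA) hX]

section DynamicProgramming

variable {α Ω : Type*} [MeasurableSpace α] {κ : Kernel α α} {c W : α → ℝ} {γ : ℝ}

lemma integral_add_integral_comp_le {ν : Measure α} [IsProbabilityMeasure ν]
    (hc : Integrable c ν) (hW : Integrable W ν) (hWκ : Integrable W (κ ∘ₘ ν))
    (hdp : ∀ a, c a + ∫ a', W a' ∂κ a ≤ W a + γ) :
    ∫ a, c a ∂ν + ∫ a, W a ∂(κ ∘ₘ ν) ≤ ∫ a, W a ∂ν + γ := by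
  have hPW := integrable_integral_of_integrable_comp hWκ
  calc ∫ a, c a ∂ν + ∫ a, W a ∂(κ ∘ₘ ν) = ∫ a, (c a + ∫ a', W a' ∂κ a) ∂ν := by
        rw [integral_comp_eq_integral_integral hWκ, integral_add hc hPW]
    _ ≤ ∫ a, (W a + γ) ∂ν := integral_mono (hc.add hPW) (hW.add (integrable_const γ)) hdp
    _ = ∫ a, W a ∂ν + γ := by simp [integral_add hW (integrable_const γ)]

lemma integral_comp_add_integral_comp_le [MeasurableSpace Ω] {P : Measure Ω}
    [IsProbabilityMeasure P] {X Y : Ω → α} (hX : Measurable X) (hY : Measurable Y)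
    (hXY : P.map Y = κ ∘ₘ P.map X) (hc : Measurable c) (hW : Measurable W)
    (hcX : Integrable (fun ω ↦ c (X ω)) P) (hWX : Integrable (fun ω ↦ W (X ω)) P)
    (hWY : Integrable (fun ω ↦ W (Y ω)) P) (hdp : ∀ a, c a + ∫ a', W a' ∂κ a ≤ W a + γ) :
    ∫ ω, c (X ω) ∂P + ∫ ω, W (Y ω) ∂P ≤ ∫ ω, W (X ω) ∂P + γ := by
  have hmap {g : α → ℝ} {Z : Ω → α} (hg : Measurable g) (hZ : Measurable Z) :
      Integrable g (P.map Z) ↔ Integrable (fun ω ↦ g (Z ω)) P :=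
    integrable_map_measure hg.aestronglyMeasurable hZ.aemeasurable
  have := Measure.isProbabilityMeasure_map (μ := P) hX.aemeasurable
  rw [← integral_map hX.aemeasurable hc.aestronglyMeasurable,
    ← integral_map hY.aemeasurable hW.aestronglyMeasurable,
    ← integral_map hX.aemeasurable hW.aestronglyMeasurable, hXY]
  refine integral_add_integral_comp_le ((hmap hc hX).2 hcX) ((hmap hW hX).2 hWX) ?_ hdp
  rw [← hXY]
  exact (hmap hW hY).2 hWY

end DynamicProgramming

lemma sum_range_le_of_add_le_add {a b : ℕ → ℝ} {γ : ℝ} (h : ∀ n, b n + a (n + 1) ≤ a n + γ)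
    (n : ℕ) : ∑ k ∈ Finset.range n, b k ≤ a 0 - a n + n * γ := by
  induction n with
  | zero => simp
  | succ n ih =>
    rw [Finset.sum_range_succ]
    push_cast
    linarith [h n]

lemma limsup_cesaro_le_of_add_le_add {a b : ℕ → ℝ} {γ M : ℝ} (hb : ∀ n, -M ≤ b n)
    (h : ∀ n, b n + a (n + 1) ≤ a n + γ) (ha : Tendsto (fun n : ℕ ↦ a n / n) atTop (𝓝 0)) :
    limsup (fun n : ℕ ↦ (1 / (n : ℝ)) * ∑ k ∈ Finset.range n, b k) atTop ≤ γ := by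
  have hbound : Tendsto (fun n : ℕ ↦ a 0 / n - a n / n + γ) atTop (𝓝 γ) := by
    simpa using ((tendsto_const_div_atTop_nhds_zero_nat (a 0)).sub ha).add_const γ
  have hle : ∀ᶠ n : ℕ in atTop,
      (1 / (n : ℝ)) * ∑ k ∈ Finset.range n, b k ≤ a 0 / n - a n / n + γ := by
    filter_upwards [eventually_gt_atTop 0] with n hn
    have hn : (0 : ℝ) < n := by exact_mod_cast hn
    rw [one_div_mul_eq_div, div_le_iff₀ hn]
    calc ∑ k ∈ Finset.range n, b k ≤ a 0 - a n + n * γ := sum_range_le_of_add_le_add h n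
      _ = (a 0 / n - a n / n + γ) * n := by field_simp
  have hge : ∀ᶠ n : ℕ in atTop, -M ≤ (1 / (n : ℝ)) * ∑ k ∈ Finset.range n, b k := by
    filter_upwards [eventually_gt_atTop 0] with n hn
    have hn : (0 : ℝ) < n := by exact_mod_cast hn
    rw [one_div_mul_eq_div, le_div_iff₀ hn]
    simpa [mul_comm] using Finset.card_nsmul_le_sum (Finset.range n) b (-M) fun k _ ↦ hb k
  calc _ ≤ limsup (fun n : ℕ ↦ a 0 / n - a n / n + γ) atTop :=
        limsup_le_limsup hle (isCoboundedUnder_le_of_eventually_le _ hge)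
          hbound.isBoundedUnder_le
    _ = γ := hbound.limsup_eq

theorem verification_upper_bound_general
    {S : Type*} [MeasurableSpace S]
    (κ : Kernel S S) [IsMarkovKernel κ]
    (Plaw : Measure (ℕ → S)) [IsProbabilityMeasure Plaw]
    (hMarkov : ∀ (n : ℕ) (A : Set S), MeasurableSet A →
      Plaw[fun ω => A.indicator (fun _ => (1 : ℝ)) (ω (n + 1)) |
          MeasurableSpace.comap (fun (ω : ℕ → S) (k : Fin (n + 1)) => ω k) inferInstance]
        =ᵐ[Plaw] fun ω => (κ (ω n) A).toReal)
    (c : S → ℝ) (hc : Measurable c) (M : ℝ) (hcb : ∀ s, |c s| ≤ M)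
    (γ : ℝ) (W : S → ℝ) (hW : Measurable W)
    (hWn : ∀ n : ℕ, Integrable (fun ω => W (ω n)) Plaw)
    (hdp : ∀ s, c s + ∫ s', W s' ∂(κ s) ≤ W s + γ)
    (hWlim : Tendsto (fun n : ℕ => (∫ ω, W (ω n) ∂Plaw) / n) atTop (nhds 0)) :
    limsup (fun n : ℕ => (1 / (n : ℝ)) * ∑ k ∈ Finset.range n, ∫ ω, c (ω k) ∂Plaw)
        atTop ≤ γ := by
  have hX (n : ℕ) : Measurable fun ω : ℕ → S ↦ ω n := measurable_pi_apply n
  have hlaw (n : ℕ) : Plaw.map (fun ω ↦ ω (n + 1)) = κ ∘ₘ Plaw.map (fun ω ↦ ω n) :=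
    map_eq_comp_map_of_condExp_indicator
      (measurable_pi_lambda (fun ω (k : Fin (n + 1)) ↦ ω k) fun k ↦ hX k).comap_le (hX n) (hX (n + 1)) (hMarkov n)
  have hcn (n : ℕ) : Integrable (fun ω ↦ c (ω n)) Plaw :=
    .of_bound (hc.comp (hX n)).aestronglyMeasurable M (ae_of_all _ fun ω ↦ hcb (ω n))
  refine limsup_cesaro_le_of_add_le_add (M := M) (fun n ↦ ?_)
    (fun n ↦ integral_comp_add_integral_comp_le (hX n) (hX (n + 1)) (hlaw n) hc hW (hcn n)
      (hWn n) (hWn (n + 1)) hdp) hWlim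
  simpa using integral_mono (integrable_const (-M)) (hcn n) fun ω ↦ neg_le_of_abs_le (hcb (ω n))

/-- Verification theorem (upper bound): let `Plaw` on `S^ℕ` be the law of the
time-homogeneous Markov chain with initial distribution `μ` and transition kernel `κ`
(characterized by its initial law and the Markov property given by the Ionescu–Tulcea
construction), with coordinate process `Xₙ(ω) = ω n`. If a measurable `W`, integrable
w.r.t. each `κ s` and along the chain, satisfies the dynamic programming inequality
`W(s) + γ ≥ c(s) + ∫ W dκ(s)` for all `s`, with `c` bounded measurable, and
`E[W(Xₙ)]/n → 0`, then `limsupₙ (1/n) ∑_{k<n} E[c(X_k)] ≤ γ`. -/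
theorem verification_upper_bound
    {S : Type*} [MeasurableSpace S] [StandardBorelSpace S]
    (κ : Kernel S S) [IsMarkovKernel κ]
    (μ : Measure S) [IsProbabilityMeasure μ]
    (Plaw : Measure (ℕ → S)) [IsProbabilityMeasure Plaw]
    (hinit : Plaw.map (fun ω => ω 0) = μ)
    (hMarkov : ∀ (n : ℕ) (A : Set S), MeasurableSet A →
      Plaw[fun ω => A.indicator (fun _ => (1 : ℝ)) (ω (n + 1)) |
          MeasurableSpace.comap (fun (ω : ℕ → S) (k : Fin (n + 1)) => ω k) inferInstance]
        =ᵐ[Plaw] fun ω => (κ (ω n) A).toReal)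
    (c : S → ℝ) (hc : Measurable c) (M : ℝ) (hcb : ∀ s, |c s| ≤ M)
    (γ : ℝ) (W : S → ℝ) (hW : Measurable W)
    (hWκ : ∀ s, Integrable W (κ s))
    (hWn : ∀ n : ℕ, Integrable (fun ω => W (ω n)) Plaw)
    (hdp : ∀ s, c s + ∫ s', W s' ∂(κ s) ≤ W s + γ)
    (hWlim : Tendsto (fun n : ℕ => (∫ ω, W (ω n) ∂Plaw) / n) atTop (nhds 0)) :
    limsup (fun n : ℕ => (1 / (n : ℝ)) * ∑ k ∈ Finset.range n, ∫ ω, c (ω k) ∂Plaw)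
        atTop ≤ γ :=
  verification_upper_bound_general κ Plaw hMarkov c hc M hcb γ W hW hWn hdp hWlim
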